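/- Let R be an LM-system, l → r ∈ R with root pair (f, g), and let s = f(s1,…,sm) and t = g(t1,…,tn) be joinable modulo R. Then f(ŝ1,…,ŝm) rewrites in one step by the rule l → r to g(t̂1,…,t̂n), where ŝi, t̂j denote the R-normal forms of si, tj; in particular the common normal form of s and t is an instance of r. -/

import Mathlib

/-! Basic first-order terms, positions, substitutions and rewriting. -/

inductive Term (F : Type) : Type
  | var : Nat → Term F
  | app : F → List (Term F) → Term F

namespace Term

def subst {F : Type} (σ : Nat → Term F) : Term F → Term F
  | var n => σ n
  | app f ts => app f (ts.attach.map fun ⟨t, _⟩ => t.subst σ)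

def root {F : Type} : Term F → Option F
  | var _ => none
  | app f _ => some f

def label {F : Type} : Term F → F ⊕ Nat
  | var n => Sum.inr n
  | app f _ => Sum.inl f

def IsVar {F : Type} : Term F → Prop
  | var _ => True
  | app _ _ => False

def varsL {F : Type} : Term F → List Nat
  | var n => [n]
  | app _ ts => (ts.attach.map fun ⟨t, _⟩ => t.varsL).flatten

end Term

abbrev Rule (F : Type) := Term F × Term F
abbrev TRS (F : Type) := Set (Rule F)

/-- `SubtermAt t p u` : the subterm of `t` at position `p` is `u`. -/
inductive SubtermAt {F : Type} : Term F → List Nat → Term F → Prop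
  | here (t : Term F) : SubtermAt t [] t
  | there {f : F} {ts : List (Term F)} {i : Nat} {u : Term F} {p : List Nat} {v : Term F} :
      ts[i]? = some u → SubtermAt u p v → SubtermAt (Term.app f ts) (i :: p) v

/-- `ReplaceAt t p v t'` : replacing the subterm of `t` at position `p` by `v` yields `t'`. -/
inductive ReplaceAt {F : Type} : Term F → List Nat → Term F → Term F → Prop
  | here (t u : Term F) : ReplaceAt t [] u u
  | there {f : F} {ts : List (Term F)} {i : Nat} {u : Term F} {p : List Nat} {v w : Term F} :
      ts[i]? = some u → ReplaceAt u p v w →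
      ReplaceAt (Term.app f ts) (i :: p) v (Term.app f (ts.set i w))

variable {F : Type}

/-- One rewrite step using the given rule (at some position, with some substitution). -/
def RuleStep (ρ : Rule F) (s t : Term F) : Prop :=
  ∃ (σ : Nat → Term F) (p : List Nat),
    SubtermAt s p (ρ.1.subst σ) ∧ ReplaceAt s p (ρ.2.subst σ) t

def OneStep (R : TRS F) (s t : Term F) : Prop := ∃ ρ ∈ R, RuleStep ρ s t

/-- A rewrite step at the root position. -/
def RootStep (R : TRS F) (s t : Term F) : Prop :=
  ∃ ρ ∈ R, ∃ σ : Nat → Term F, s = ρ.1.subst σ ∧ t = ρ.2.subst σ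

def StarRW (R : TRS F) : Term F → Term F → Prop := Relation.ReflTransGen (OneStep R)
def Plus (R : TRS F) : Term F → Term F → Prop := Relation.TransGen (OneStep R)
/-- Convertibility (the congruence / equational theory generated by `R`). -/
def Conv (R : TRS F) : Term F → Term F → Prop := Relation.EqvGen (OneStep R)
def Joinable (R : TRS F) (s t : Term F) : Prop := ∃ u, StarRW R s u ∧ StarRW R t u
def NormalForm (R : TRS F) (t : Term F) : Prop := ∀ u, ¬ OneStep R t u
/-- `t` is the `R`-normal form of `s`. -/
def NFof (R : TRS F) (s t : Term F) : Prop := StarRW R s t ∧ NormalForm R t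
def Terminating (R : TRS F) : Prop := WellFounded (fun a b : Term F => OneStep R b a)
def Confluent (R : TRS F) : Prop := ∀ s t u, StarRW R s t → StarRW R s u → Joinable R t u
def Convergent (R : TRS F) : Prop := Confluent R ∧ Terminating R

/-- every proper subterm is irreducible -/
def EpsIrreducible (R : TRS F) (t : Term F) : Prop :=
  ∀ p u, SubtermAt t p u → p ≠ [] → NormalForm R u

def InnermostRedex (R : TRS F) (t : Term F) : Prop :=
  EpsIrreducible R t ∧ ¬ NormalForm R t

/-- Forward-closed, via the one-step-to-normal-form characterization. -/
def FCclosed (R : TRS F) : Prop :=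
  ∀ t, InnermostRedex R t → ∀ u, NFof R t u → OneStep R t u

def Unifies (σ : Nat → Term F) (s t : Term F) : Prop := s.subst σ = t.subst σ

def IsMGU (σ : Nat → Term F) (s t : Term F) : Prop :=
  Unifies σ s t ∧ ∀ τ, Unifies τ s t → ∃ δ, ∀ x, τ x = (σ x).subst δ

def IsRenaming (ρ : Nat → Term F) : Prop :=
  ∃ f : Nat → Nat, Function.Injective f ∧ ∀ n, ρ n = Term.var (f n)

/-- Redundancy criterion for an oriented equation `e` whose right-hand side is
reachable from its left-hand side: some proper subterm of the lhs is reducible. -/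
def Redundant (R : TRS F) (e : Rule F) : Prop :=
  ∃ p u, p ≠ ([] : List Nat) ∧ SubtermAt e.1 p u ∧ ¬ NormalForm R u

/-- `R₁ ↝ R₂`: forward overlaps of rules of `R₂` (renamed apart) into
right-hand sides of rules of `R₁`, at non-variable positions, via an mgu. -/
def FStep (R₁ R₂ : TRS F) : TRS F :=
  { e | ∃ (l₁ r₁ l₂ r₂ : Term F) (ρ : Nat → Term F) (p : List Nat) (u : Term F)
          (σ : Nat → Term F) (r₁' : Term F),
      (l₁, r₁) ∈ R₁ ∧ (l₂, r₂) ∈ R₂ ∧ IsRenaming ρ ∧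
      SubtermAt r₁ p u ∧ ¬ u.IsVar ∧ IsMGU σ u (l₂.subst ρ) ∧
      ReplaceAt r₁ p (r₂.subst ρ) r₁' ∧ e = (l₁.subst σ, r₁'.subst σ) }

def FCiter (R : TRS F) : Nat → TRS F
  | 0 => R
  | k + 1 => FCiter R k ∪ { e | e ∈ FStep (FCiter R k) R ∧ ¬ Redundant (FCiter R k) e }

def FCinf (R : TRS F) : TRS F := ⋃ k, FCiter R k

/-- Forward-closed, via the forward-closure construction: `FC(R) = R`. -/
def ForwardClosedFC (R : TRS F) : Prop := FCinf R = R

/-- `RHS(R)`: `R` together with the conclusions of right-hand-side critical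
pair inferences (second rule renamed apart). -/
def RHSset (R : TRS F) : TRS F :=
  R ∪ { e | ∃ (s t u₀ v₀ : Term F) (ρ σ : Nat → Term F), (s, t) ∈ R ∧ (u₀, v₀) ∈ R ∧
        IsRenaming ρ ∧ IsMGU σ t (v₀.subst ρ) ∧
        s.subst σ ≠ (u₀.subst ρ).subst σ ∧ e = (s.subst σ, (u₀.subst ρ).subst σ) }

/-- the (unordered) pairs of root symbols of two equations coincide -/
def RootPairSimilar (e₁ e₂ : Rule F) : Prop :=
  (e₁.1.root = e₂.1.root ∧ e₁.2.root = e₂.2.root) ∨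
  (e₁.1.root = e₂.2.root ∧ e₁.2.root = e₂.1.root)

def QuasiDet (E : TRS F) : Prop :=
  (∀ e ∈ E, ¬ e.1.IsVar ∧ ¬ e.2.IsVar) ∧
  (∀ e ∈ E, e.1.root ≠ e.2.root) ∧
  (∀ e₁ ∈ E, ∀ e₂ ∈ E, e₁ ≠ e₂ → ¬ RootPairSimilar e₁ e₂)

def HasRootPairRepetition (E : TRS F) : Prop :=
  ∃ e₁ ∈ E, ∃ e₂ ∈ E, e₁ ≠ e₂ ∧ RootPairSimilar e₁ e₂

def VarPreserving (R : TRS F) : Prop :=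
  ∀ e ∈ R, ∀ n, n ∈ Term.varsL e.1 ↔ n ∈ Term.varsL e.2

def RightReduced (R : TRS F) : Prop := ∀ e ∈ R, NormalForm R e.2

def AlmostLeftReduced (R : TRS F) : Prop :=
  ¬ ∃ (l₁ r₁ l₂ r₂ : Term F) (p : List Nat) (u : Term F) (σ : Nat → Term F),
      (l₁, r₁) ∈ R ∧ (l₂, r₂) ∈ R ∧ p ≠ [] ∧ SubtermAt l₁ p u ∧ u = l₂.subst σ

def NonSubtermCollapsing (R : TRS F) : Prop :=
  ¬ ∃ (t u : Term F) (p : List Nat), p ≠ [] ∧ SubtermAt u p t ∧ Conv R t u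

structure LMSystem (R : TRS F) : Prop where
  convergent : Convergent R
  almostLeftReduced : AlmostLeftReduced R
  rightReduced : RightReduced R
  nonCollapsing : NonSubtermCollapsing R
  forwardClosed : FCclosed R
  quasiDet : QuasiDet (RHSset R)

/-- the symbol (function symbol or variable) of a term at a position, if defined -/
def labelAt {F : Type} : List Nat → Term F → Option (F ⊕ Nat)
  | [], t => some t.label
  | i :: p, Term.app _ ts => (ts[i]?).bind (labelAt p)
  | _ :: _, Term.var _ => none

/-- outermost distinguishing position -/
def ODP (s t : Term F) (p : List Nat) : Prop :=
  (labelAt p s ≠ none ∨ labelAt p t ≠ none) ∧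
  labelAt p s ≠ labelAt p t ∧
  ∀ q, q <+: p → q ≠ p → labelAt q s = labelAt q t

/-!
Let `n` be the common normal form of `s` and `t`. By confluence it is also the normal form of
`s' = f(ŝ₁,…,ŝₘ)` and `t' = g(t̂₁,…,t̂ₙ)`, and by forward closure each of them that is reducible
reaches `n` in one root step, since its arguments are normal. If `t'` were reducible, then either
`s' = n` and the rule applied to `t'` has the reversed root pair `(g, f)`, or the rules applied to
`s'` and `t'` have overlapping right-hand sides and their right-hand-side critical pair has root
pair `(f, g)`. Quasi-determinism of `RHS(R)` excludes the first case and, in the second, forces the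
critical pair to be `l → r`, making `r` reducible against right-reducedness. So `t' = n`, hence
`s'` is reducible, and the rule of its root step to `n` has root pair `(f, g)`: it is `l → r`.
-/

namespace Term

@[induction_eliminator]
theorem induction_on' {motive : Term F → Prop} (var : ∀ n, motive (var n))
    (app : ∀ f ts, (∀ t ∈ ts, motive t) → motive (app f ts)) : ∀ t, motive t
  | .var n => var n
  | .app f ts => app f ts fun t _ => induction_on' var app t

@[simp] theorem subst_var (σ : Nat → Term F) (n : Nat) : (var n).subst σ = σ n := by
  simp [subst]

@[simp] theorem subst_app (σ : Nat → Term F) (f : F) (ts : List (Term F)) :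
    (app f ts).subst σ = app f (ts.map (·.subst σ)) := by
  simp [subst]

@[simp] theorem varsL_var (n : Nat) : (var n : Term F).varsL = [n] := by
  simp [varsL]

@[simp] theorem varsL_app (f : F) (ts : List (Term F)) :
    (app f ts).varsL = (ts.map varsL).flatten := by
  simp [varsL]

theorem mem_varsL_app {x : Nat} {f : F} {ts : List (Term F)} :
    x ∈ (app f ts).varsL ↔ ∃ t ∈ ts, x ∈ t.varsL := by
  simp

def size : Term F → Nat
  | var _ => 1
  | app _ ts => 1 + (ts.attach.map fun ⟨t, _⟩ => t.size).sum

@[simp] theorem size_var (n : Nat) : (var n : Term F).size = 1 := by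
  simp [size]

@[simp] theorem size_app (f : F) (ts : List (Term F)) :
    (app f ts).size = 1 + (ts.map size).sum := by
  simp [size]

theorem size_lt_size_app {t : Term F} {ts : List (Term F)} (ht : t ∈ ts) (f : F) :
    t.size < (app f ts).size := by
  have := List.le_sum_of_mem (List.mem_map_of_mem (f := size) ht)
  rw [size_app]
  omega

theorem subst_subst (t : Term F) (σ τ : Nat → Term F) :
    (t.subst σ).subst τ = t.subst fun x => (σ x).subst τ := by
  induction t with
  | var n => simp
  | app f ts ih => simpa using List.map_congr_left ih

theorem subst_congr {σ τ : Nat → Term F} {t : Term F} (h : ∀ x ∈ t.varsL, σ x = τ x) :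
    t.subst σ = t.subst τ := by
  induction t with
  | var n => simpa using h
  | app f ts ih =>
    simpa using List.map_congr_left fun t ht =>
      ih t ht fun x hx => h x (mem_varsL_app.2 ⟨t, ht, hx⟩)

theorem subst_var_self (t : Term F) : t.subst var = t := by
  induction t with
  | var n => simp
  | app f ts ih => simpa using List.map_congr_left ih

theorem exists_mem_varsL_of_mem_varsL_subst {σ : Nat → Term F} {t : Term F} {y : Nat}
    (h : y ∈ (t.subst σ).varsL) : ∃ x ∈ t.varsL, y ∈ (σ x).varsL := by
  induction t with
  | var n => simpa using h
  | app f ts ih =>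
    simp only [subst_app, varsL_app, List.map_map, List.mem_flatten, List.mem_map,
      Function.comp] at h ⊢
    obtain ⟨_, ⟨t, ht, rfl⟩, hy⟩ := h
    obtain ⟨x, hx, hyx⟩ := ih t ht hy
    exact ⟨x, ⟨_, ⟨t, ht, rfl⟩, hx⟩, hyx⟩

theorem size_le_size_subst {σ : Nat → Term F} {t : Term F} {x : Nat} (h : x ∈ t.varsL) :
    (σ x).size ≤ (t.subst σ).size := by
  induction t with
  | var n => simp_all
  | app f ts ih =>
    obtain ⟨t, ht, hx⟩ := mem_varsL_app.1 h
    calc (σ x).size ≤ (t.subst σ).size := ih t ht hx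
      _ ≤ ((app f ts).subst σ).size := by
        rw [subst_app]; exact (size_lt_size_app (List.mem_map_of_mem ht) f).le

theorem not_mem_varsL_of_subst_eq {σ : Nat → Term F} {x : Nat} {t : Term F}
    (hne : t ≠ var x) (h : σ x = t.subst σ) : x ∉ t.varsL := by
  intro hx
  cases t with
  | var n => simp_all
  | app f ts =>
    obtain ⟨t, ht, hx⟩ := mem_varsL_app.1 hx
    have := calc (σ x).size ≤ (t.subst σ).size := size_le_size_subst hx
      _ < ((app f ts).subst σ).size := by
        rw [subst_app]; exact size_lt_size_app (List.mem_map_of_mem ht) f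
    exact this.ne (congrArg size h)

theorem root_subst {t : Term F} {f : F} (h : t.root = some f) (σ : Nat → Term F) :
    (t.subst σ).root = some f := by
  cases t <;> simp_all [root]

theorem root_eq_of_subst_eq {t u : Term F} {σ : Nat → Term F} (ht : ¬ t.IsVar)
    (h : t.subst σ = u) : t.root = u.root := by
  cases t with
  | var n => exact absurd trivial ht
  | app f ts => subst h; simp [root]

end Term

section Unification

open Term

def UnifiesAll (σ : Nat → Term F) (E : List (Term F × Term F)) : Prop :=
  ∀ e ∈ E, e.1.subst σ = e.2.subst σ

def IsMGUAll (σ : Nat → Term F) (E : List (Term F × Term F)) : Prop :=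
  UnifiesAll σ E ∧ ∀ τ, UnifiesAll τ E → ∃ δ, ∀ x, τ x = (σ x).subst δ

def eqnVars (E : List (Term F × Term F)) : Finset Nat :=
  (E.flatMap fun e => e.1.varsL ++ e.2.varsL).toFinset

def eqnSize (E : List (Term F × Term F)) : Nat :=
  (E.map fun e => e.1.size + e.2.size).sum

def elimEqns (x : Nat) (v : Term F) (E : List (Term F × Term F)) : List (Term F × Term F) :=
  E.map (Prod.map (subst (Function.update var x v)) (subst (Function.update var x v)))

theorem unifiesAll_cons {σ : Nat → Term F} {e : Term F × Term F} {E : List (Term F × Term F)} :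
    UnifiesAll σ (e :: E) ↔ e.1.subst σ = e.2.subst σ ∧ UnifiesAll σ E :=
  List.forall_mem_cons

theorem isMGUAll_nil : IsMGUAll (var : Nat → Term F) [] :=
  ⟨by simp [UnifiesAll], fun τ _ => ⟨τ, by simp⟩⟩

theorem IsMGUAll.of_unifiesAll_iff {σ : Nat → Term F} {E E' : List (Term F × Term F)}
    (hE : ∀ τ, UnifiesAll τ E ↔ UnifiesAll τ E') (hσ : IsMGUAll σ E') : IsMGUAll σ E :=
  ⟨(hE σ).2 hσ.1, fun τ hτ => hσ.2 τ ((hE τ).1 hτ)⟩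

theorem subst_update_subst {x : Nat} {v : Term F} {τ : Nat → Term F} (hτ : τ x = v.subst τ)
    (t : Term F) : (t.subst (Function.update var x v)).subst τ = t.subst τ := by
  rw [subst_subst]
  refine subst_congr fun z _ => ?_
  by_cases hz : z = x
  · subst hz; simp [hτ]
  · simp [hz]

theorem unifiesAll_elimEqns_iff {x : Nat} {v : Term F} {τ : Nat → Term F}
    (hτ : τ x = v.subst τ) (E : List (Term F × Term F)) :
    UnifiesAll τ (elimEqns x v E) ↔ UnifiesAll τ E := by
  simp only [UnifiesAll, elimEqns, List.forall_mem_map, Prod.map_fst, Prod.map_snd,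
    subst_update_subst hτ]

theorem IsMGUAll.elim {x : Nat} {v : Term F} {E : List (Term F × Term F)} {σ : Nat → Term F}
    (hx : x ∉ v.varsL) (hσ : IsMGUAll σ (elimEqns x v E)) :
    IsMGUAll (fun z => (Function.update var x v z).subst σ) ((var x, v) :: E) := by
  have hv : v.subst (Function.update var x v) = v := by
    conv_rhs => rw [← subst_var_self v]
    exact subst_congr fun z hz => Function.update_of_ne (ne_of_mem_of_not_mem hz hx) _ _
  have hσx : (fun z => (Function.update var x v z).subst σ) x =
      v.subst fun z => (Function.update var x v z).subst σ := by
    rw [← subst_subst, hv]; simp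
  refine ⟨unifiesAll_cons.2 ⟨by simpa using hσx, ?_⟩, fun τ hτ => ?_⟩
  · intro e he
    rw [← subst_subst, ← subst_subst]
    exact hσ.1 _ (List.mem_map_of_mem he)
  · have hτx : τ x = v.subst τ := by simpa using (unifiesAll_cons.1 hτ).1
    obtain ⟨δ, hδ⟩ := hσ.2 τ ((unifiesAll_elimEqns_iff hτx E).2 (unifiesAll_cons.1 hτ).2)
    refine ⟨δ, fun z => ?_⟩
    have hτσ : (fun w => (σ w).subst δ) = τ := funext fun w => (hδ w).symm
    rw [subst_subst, hτσ]
    simpa using (subst_update_subst hτx (var z)).symm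

theorem mem_eqnVars {y : Nat} {E : List (Term F × Term F)} :
    y ∈ eqnVars E ↔ ∃ e ∈ E, y ∈ e.1.varsL ∨ y ∈ e.2.varsL := by
  simp [eqnVars]

theorem eqnVars_cons_swap (a b : Term F) (E : List (Term F × Term F)) :
    eqnVars ((a, b) :: E) = eqnVars ((b, a) :: E) := by
  ext y
  simp only [mem_eqnVars, List.mem_cons, exists_eq_or_imp, or_comm (a := y ∈ a.varsL)]

theorem eqnVars_subset_cons (e : Term F × Term F) (E : List (Term F × Term F)) :
    eqnVars E ⊆ eqnVars (e :: E) := fun _ hy =>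
  have ⟨e', he', h⟩ := mem_eqnVars.1 hy
  mem_eqnVars.2 ⟨e', List.mem_cons_of_mem _ he', h⟩

theorem mem_varsL_subst_update {x y : Nat} {v t : Term F}
    (hy : y ∈ (t.subst (Function.update var x v)).varsL) :
    y ∈ v.varsL ∨ (y ∈ t.varsL ∧ y ≠ x) := by
  obtain ⟨z, hz, hyz⟩ := exists_mem_varsL_of_mem_varsL_subst hy
  by_cases hzx : z = x
  · subst hzx; simp_all
  · simp only [Function.update_of_ne hzx, varsL_var, List.mem_singleton] at hyz
    subst hyz
    exact Or.inr ⟨hz, hzx⟩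

theorem eqnVars_elimEqns_ssubset {x : Nat} {v : Term F} (hx : x ∉ v.varsL)
    (E : List (Term F × Term F)) : eqnVars (elimEqns x v E) ⊂ eqnVars ((var x, v) :: E) := by
  have key : ∀ y ∈ eqnVars (elimEqns x v E), y ∈ v.varsL ∨ (y ∈ eqnVars E ∧ y ≠ x) := by
    intro y hy
    obtain ⟨_, he', hy⟩ := mem_eqnVars.1 hy
    obtain ⟨e, he, rfl⟩ := List.mem_map.1 he'
    rcases hy.imp mem_varsL_subst_update mem_varsL_subst_update with (h | h) | (h | h)
    · exact Or.inl h
    · exact Or.inr ⟨mem_eqnVars.2 ⟨e, he, Or.inl h.1⟩, h.2⟩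
    · exact Or.inl h
    · exact Or.inr ⟨mem_eqnVars.2 ⟨e, he, Or.inr h.1⟩, h.2⟩
  have hsub : eqnVars (elimEqns x v E) ⊆ eqnVars ((var x, v) :: E) := fun y hy =>
    (key y hy).elim (fun h => mem_eqnVars.2 ⟨_, List.mem_cons_self, Or.inr h⟩)
      fun h => eqnVars_subset_cons _ E h.1
  refine (Finset.ssubset_iff_of_subset hsub).2
    ⟨x, mem_eqnVars.2 ⟨_, List.mem_cons_self, Or.inl (by simp)⟩, fun hx' => ?_⟩
  rcases key x hx' with h | h
  exacts [hx h, h.2 rfl]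

theorem eqnVars_zip_append_subset (f g : F) (ts us : List (Term F)) (E : List (Term F × Term F)) :
    eqnVars (ts.zip us ++ E) ⊆ eqnVars ((app f ts, app g us) :: E) := by
  intro y hy
  obtain ⟨e, he, hy⟩ := mem_eqnVars.1 hy
  rcases List.mem_append.1 he with he | he
  · obtain ⟨h₁, h₂⟩ := List.of_mem_zip he
    exact mem_eqnVars.2 ⟨_, List.mem_cons_self,
      hy.imp (fun hy => mem_varsL_app.2 ⟨_, h₁, hy⟩) fun hy => mem_varsL_app.2 ⟨_, h₂, hy⟩⟩
  · exact eqnVars_subset_cons _ E (mem_eqnVars.2 ⟨e, he, hy⟩)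

theorem eqnSize_lt_cons (e : Term F × Term F) (E : List (Term F × Term F)) :
    eqnSize E < eqnSize (e :: E) := by
  have : 0 < e.1.size := by cases e.1 <;> simp
  simp only [eqnSize, List.map_cons, List.sum_cons]
  omega

theorem eqnSize_zip_le : ∀ ts us : List (Term F),
    eqnSize (ts.zip us) ≤ (ts.map size).sum + (us.map size).sum
  | [], _ => by simp [eqnSize]
  | _ :: _, [] => by simp [eqnSize]
  | t :: ts, u :: us => by
    have := eqnSize_zip_le ts us
    simp only [eqnSize, List.zip_cons_cons, List.map_cons, List.sum_cons] at this ⊢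
    omega

theorem eqnSize_zip_append_lt (f g : F) (ts us : List (Term F)) (E : List (Term F × Term F)) :
    eqnSize (ts.zip us ++ E) < eqnSize ((app f ts, app g us) :: E) := by
  have := eqnSize_zip_le ts us
  simp only [eqnSize, List.map_append, List.sum_append, List.map_cons, List.sum_cons,
    size_app] at this ⊢
  omega

theorem unifiesAll_zip_iff {σ : Nat → Term F} {ts us : List (Term F)}
    (h : ts.length = us.length) :
    UnifiesAll σ (ts.zip us) ↔ ts.map (·.subst σ) = us.map (·.subst σ) := by
  rw [← List.forall₂_eq_eq_eq, List.forall₂_map_left_iff, List.forall₂_map_right_iff,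
    List.forall₂_iff_zip]
  simp [UnifiesAll, h]

-- Martelli–Montanari unification: eliminating a variable shrinks `eqnVars`, the other rules do
-- not enlarge it and shrink `eqnSize`.
theorem exists_isMGUAll : ∀ E : List (Term F × Term F), (∃ μ, UnifiesAll μ E) →
    ∃ σ, IsMGUAll σ E
  | [], _ => ⟨var, isMGUAll_nil⟩
  | (var x, v) :: E, ⟨μ, hμ⟩ => by
    obtain ⟨hμx, hμE⟩ := unifiesAll_cons.1 hμ
    by_cases hv : v = var x
    · subst hv
      obtain ⟨σ, hσ⟩ := exists_isMGUAll E ⟨μ, hμE⟩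
      exact ⟨σ, hσ.of_unifiesAll_iff fun τ => by simp [unifiesAll_cons]⟩
    · have hx := not_mem_varsL_of_subst_eq hv (by simpa using hμx)
      obtain ⟨σ, hσ⟩ := exists_isMGUAll (elimEqns x v E)
        ⟨μ, (unifiesAll_elimEqns_iff (by simpa using hμx) E).2 hμE⟩
      exact ⟨_, hσ.elim hx⟩
  | (app f ts, var x) :: E, ⟨μ, hμ⟩ => by
    obtain ⟨hμx, hμE⟩ := unifiesAll_cons.1 hμ
    have hx := not_mem_varsL_of_subst_eq (t := app f ts) (by simp) (by simpa using hμx.symm)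
    obtain ⟨σ, hσ⟩ := exists_isMGUAll (elimEqns x (app f ts) E)
      ⟨μ, (unifiesAll_elimEqns_iff (by simpa using hμx.symm) E).2 hμE⟩
    exact ⟨_, (hσ.elim hx).of_unifiesAll_iff fun τ => by simp [unifiesAll_cons, eq_comm]⟩
  | (app f ts, app g us) :: E, ⟨μ, hμ⟩ => by
    obtain ⟨hμfg, hμE⟩ := unifiesAll_cons.1 hμ
    simp only [subst_app, app.injEq] at hμfg
    obtain ⟨rfl, hμts⟩ := hμfg
    have hlen : ts.length = us.length := by simpa using congrArg List.length hμts
    have hE : ∀ τ, UnifiesAll τ ((app f ts, app f us) :: E) ↔ UnifiesAll τ (ts.zip us ++ E) := by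
      intro τ
      simp [UnifiesAll, ← unifiesAll_zip_iff hlen, or_imp, forall_and]
    obtain ⟨σ, hσ⟩ := exists_isMGUAll (ts.zip us ++ E) ⟨μ, (hE μ).1 hμ⟩
    exact ⟨σ, hσ.of_unifiesAll_iff hE⟩
termination_by E => ((eqnVars E).card, eqnSize E)
decreasing_by
  · subst hv
    exact Prod.Lex.right' _ (Finset.card_le_card (eqnVars_subset_cons _ E)) (eqnSize_lt_cons _ E)
  · exact Prod.Lex.left _ _ (Finset.card_lt_card (eqnVars_elimEqns_ssubset hx E))
  · rw [eqnVars_cons_swap]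
    exact Prod.Lex.left _ _ (Finset.card_lt_card (eqnVars_elimEqns_ssubset hx E))
  · exact Prod.Lex.right' _ (Finset.card_le_card (eqnVars_zip_append_subset f g ts us E))
      (eqnSize_zip_append_lt f g ts us E)

theorem exists_isMGU {u v : Term F} (h : ∃ μ, Unifies μ u v) : ∃ σ, IsMGU σ u v := by
  have hiff : ∀ τ, UnifiesAll τ [(u, v)] ↔ Unifies τ u v := fun τ => by
    simp [UnifiesAll, Unifies]
  obtain ⟨σ, hσ⟩ := exists_isMGUAll [(u, v)] (by simpa [hiff] using h)
  exact ⟨σ, (hiff σ).1 hσ.1, fun τ hτ => hσ.2 τ ((hiff τ).2 hτ)⟩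

theorem exists_renaming_unifies {t u : Term F} {σ τ : Nat → Term F}
    (h : t.subst σ = u.subst τ) : ∃ ρ, IsRenaming ρ ∧ ∃ μ, Unifies μ t (u.subst ρ) := by
  set N := t.varsL.sum + 1
  refine ⟨fun z => .var (z + N), ⟨(· + N), add_left_injective N, fun _ => rfl⟩,
    fun y => if y < N then σ y else τ (y - N), ?_⟩
  have hσ : t.subst (fun y => if y < N then σ y else τ (y - N)) = t.subst σ :=
    subst_congr fun y hy => if_pos (Nat.lt_succ_of_le (List.le_sum_of_mem hy))
  rw [Unifies, hσ, h, subst_subst]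
  exact subst_congr fun z _ => by simp

end Unification

section Rewriting

variable {R : TRS F}

theorem OneStep.app_append {t u : Term F} (h : OneStep R t u) (f : F)
    (pre post : List (Term F)) :
    OneStep R (Term.app f (pre ++ t :: post)) (Term.app f (pre ++ u :: post)) := by
  obtain ⟨ρ, hρ, σ, p, hsub, hrep⟩ := h
  have hget : (pre ++ t :: post)[pre.length]? = some t := by simp
  refine ⟨ρ, hρ, σ, pre.length :: p, .there hget hsub, ?_⟩
  simpa using ReplaceAt.there (f := f) hget hrep

theorem StarRW.app_args {f : F} {ts us : List (Term F)} (h : List.Forall₂ (StarRW R) ts us) :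
    StarRW R (Term.app f ts) (Term.app f us) := by
  suffices ∀ pre, StarRW R (Term.app f (pre ++ ts)) (Term.app f (pre ++ us)) by
    simpa using this []
  induction h with
  | nil => exact fun _ => .refl
  | @cons t u ts us htu _ ih =>
    intro pre
    have hhead : StarRW R (Term.app f (pre ++ t :: ts)) (Term.app f (pre ++ u :: ts)) :=
      Relation.ReflTransGen.lift (fun t => Term.app f (pre ++ t :: ts))
        (fun _ _ h => OneStep.app_append h f pre ts) _ _ htu
    have htail := ih (pre ++ [u])
    simp only [List.append_assoc, List.singleton_append] at htail
    exact hhead.trans htail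

theorem NormalForm.eq_of_starRW {t u : Term F} (ht : NormalForm R t) (h : StarRW R t u) :
    t = u :=
  h.cases_head.resolve_right fun ⟨v, hv, _⟩ => ht v hv

theorem NormalForm.subtermAt {t u : Term F} {p : List Nat} (ht : NormalForm R t)
    (h : SubtermAt t p u) : NormalForm R u := by
  induction h with
  | here => exact ht
  | there hget _ ih =>
    exact ih fun _ ⟨ρ, hρ, σ, q, hsub, hrep⟩ =>
      ht _ ⟨ρ, hρ, σ, _ :: q, .there hget hsub, .there hget hrep⟩

theorem not_normalForm_subst_lhs {l r : Term F} (h : (l, r) ∈ R) (σ : Nat → Term F) :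
    ¬ NormalForm R (l.subst σ) :=
  fun hnf => hnf _ ⟨_, h, σ, [], .here _, .here _ _⟩

theorem epsIrreducible_app {f : F} {ts : List (Term F)} (hts : ∀ t ∈ ts, NormalForm R t) :
    EpsIrreducible R (Term.app f ts) := by
  intro p u hsub hp
  cases hsub with
  | here => exact absurd rfl hp
  | there hget hsub => exact (hts _ (List.mem_of_getElem? hget)).subtermAt hsub

theorem EpsIrreducible.rootStep {t u : Term F} (ht : EpsIrreducible R t) (h : OneStep R t u) :
    RootStep R t u := by
  obtain ⟨ρ, hρ, σ, p, hsub, hrep⟩ := h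
  by_cases hp : p = []
  · subst hp
    generalize hl : ρ.1.subst σ = l at hsub
    generalize hr : ρ.2.subst σ = r at hrep
    cases hsub
    cases hrep
    exact ⟨ρ, hρ, σ, hl.symm, hr.symm⟩
  · exact absurd ⟨ρ, hρ, σ, [], .here _, .here _ _⟩ (ht p _ hsub hp (ρ.2.subst σ))

theorem forall_mem_normalForm_of_forall₂ {ss ss' : List (Term F)}
    (h : List.Forall₂ (NFof R) ss ss') : ∀ u ∈ ss', NormalForm R u := by
  induction h with
  | nil => simp
  | cons hab _ ih => exact List.forall_mem_cons.2 ⟨hab.2, ih⟩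

theorem Terminating.exists_nfOf (hR : Terminating R) (t : Term F) : ∃ u, NFof R t u := by
  induction t using hR.induction with
  | h t ih =>
    by_cases ht : NormalForm R t
    · exact ⟨t, .refl, ht⟩
    · simp only [NormalForm, not_forall, not_not] at ht
      obtain ⟨v, hv⟩ := ht
      obtain ⟨u, hvu, hu⟩ := ih v hv
      exact ⟨u, .head hv hvu, hu⟩

theorem Confluent.nfOf_of_starRW (hR : Confluent R) {s t n : Term F} (hst : StarRW R s t)
    (hsn : NFof R s n) : NFof R t n := by
  obtain ⟨m, htm, hnm⟩ := hR s t n hst hsn.1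
  exact ⟨(hsn.2.eq_of_starRW hnm).symm ▸ htm, hsn.2⟩

theorem Convergent.exists_nfOf_of_joinable (hR : Convergent R) {s t s' t' : Term F}
    (hj : Joinable R s t) (hs : StarRW R s s') (ht : StarRW R t t') :
    ∃ n, NFof R s' n ∧ NFof R t' n := by
  obtain ⟨u, hsu, htu⟩ := hj
  obtain ⟨n, hun, hn⟩ := hR.2.exists_nfOf u
  exact ⟨n, hR.1.nfOf_of_starRW hs ⟨hsu.trans hun, hn⟩,
    hR.1.nfOf_of_starRW ht ⟨htu.trans hun, hn⟩⟩

end Rewriting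

theorem QuasiDet.eq_of_rootPairSimilar {E : TRS F} (hE : QuasiDet E) {e₁ e₂ : Rule F}
    (h₁ : e₁ ∈ E) (h₂ : e₂ ∈ E) (h : RootPairSimilar e₁ e₂) : e₁ = e₂ :=
  by_contra fun hne => hE.2.2 e₁ h₁ e₂ h₂ hne h

namespace LMSystem

variable {R : TRS F}

theorem root_ne (hlm : LMSystem R) {l r : Term F} (h : (l, r) ∈ R) : l.root ≠ r.root :=
  hlm.quasiDet.2.1 _ (Or.inl h)

theorem eq_of_root_eq (hlm : LMSystem R) {e : Rule F} {l r : Term F} (he : e ∈ RHSset R)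
    (h : (l, r) ∈ R) (hl : e.1.root = l.root) (hr : e.2.root = r.root) : e = (l, r) :=
  hlm.quasiDet.eq_of_rootPairSimilar he (Or.inl h) (Or.inl ⟨hl, hr⟩)

theorem root_ne_swap (hlm : LMSystem R) {l r l' r' : Term F} (h : (l, r) ∈ R)
    (h' : (l', r') ∈ R) (hl' : l'.root = r.root) : r'.root ≠ l.root := fun hr' =>
  hlm.root_ne h <| by
    obtain ⟨rfl, rfl⟩ := Prod.mk.inj <|
      hlm.quasiDet.eq_of_rootPairSimilar (Or.inl h') (Or.inl h) (Or.inr ⟨hl', hr'⟩)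
    exact hl'

-- Forward closure makes the step to the normal form a single one, at the root as the arguments
-- are normal.
theorem exists_rule_of_nfOf (hlm : LMSystem R) {f : F} {ts : List (Term F)} {n : Term F}
    (hts : ∀ t ∈ ts, NormalForm R t) (hred : ¬ NormalForm R (.app f ts))
    (hn : NFof R (.app f ts) n) :
    ∃ l r σ, (l, r) ∈ R ∧ .app f ts = l.subst σ ∧ n = r.subst σ ∧
      l.root = some f ∧ r.root = n.root := by
  have heps := epsIrreducible_app (f := f) hts
  obtain ⟨⟨l, r⟩, h, σ, hl, hr⟩ := heps.rootStep (hlm.forwardClosed _ ⟨heps, hred⟩ n hn)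
  obtain ⟨hlv, hrv⟩ := hlm.quasiDet.1 _ (Or.inl h)
  exact ⟨l, r, σ, h, hl, hr, Term.root_eq_of_subst_eq hlv hl.symm,
    Term.root_eq_of_subst_eq hrv hr.symm⟩

-- The right-hand-side critical pair of the two rules would have the root pair of `l → r`, hence be
-- `l → r` by quasi-determinism, making `r` reducible.
theorem subst_rhs_ne (hlm : LMSystem R) {l r l₁ r₁ l₂ r₂ : Term F} {f g : F} (h : (l, r) ∈ R)
    (hl : l.root = some f) (hr : r.root = some g) (h₁ : (l₁, r₁) ∈ R) (h₂ : (l₂, r₂) ∈ R)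
    (hl₁ : l₁.root = some f) (hl₂ : l₂.root = some g) (σ₁ σ₂ : Nat → Term F) :
    r₁.subst σ₁ ≠ r₂.subst σ₂ := by
  intro heq
  obtain ⟨ρ, hρ, hunif⟩ := exists_renaming_unifies heq
  obtain ⟨σ, hσ⟩ := exists_isMGU hunif
  have hroot₁ : (l₁.subst σ).root = some f := Term.root_subst hl₁ σ
  have hroot₂ : ((l₂.subst ρ).subst σ).root = some g :=
    Term.root_subst (Term.root_subst hl₂ ρ) σ
  have hfg : f ≠ g := fun hfg => hlm.root_ne h (by rw [hl, hr, hfg])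
  have hcp : (l₁.subst σ, (l₂.subst ρ).subst σ) ∈ RHSset R :=
    Or.inr ⟨l₁, r₁, l₂, r₂, ρ, σ, h₁, h₂, hρ, hσ, fun he => hfg (by
      rw [he, hroot₂] at hroot₁; exact (Option.some.inj hroot₁).symm), rfl⟩
  have hr' : (l₂.subst ρ).subst σ = r := congrArg Prod.snd <|
    hlm.eq_of_root_eq hcp h (hroot₁.trans hl.symm) (hroot₂.trans hr.symm)
  rw [Term.subst_subst] at hr'
  exact not_normalForm_subst_lhs h₂ _ (hr' ▸ hlm.rightReduced _ h)

end LMSystem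

/-- if `f(s₁,…,sₘ)` and `g(t₁,…,tₙ)` are joinable and `l → r ∈ R` has root
pair `(f, g)`, then the term with normalized arguments on the `f` side rewrites in one
step by `l → r` to the one on the `g` side, which is an instance of `r`. -/
theorem normalized_args_step {F : Type} (R : TRS F) (hlm : LMSystem R)
    (l r : Term F) (hrule : (l, r) ∈ R)
    (f g : F) (hl : l.root = some f) (hr : r.root = some g)
    (ss ts ss' ts' : List (Term F))
    (hss : List.Forall₂ (NFof R) ss ss') (hts : List.Forall₂ (NFof R) ts ts')
    (hj : Joinable R (Term.app f ss) (Term.app g ts)) :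
    RuleStep (l, r) (Term.app f ss') (Term.app g ts') ∧
      ∃ τ : Nat → Term F, Term.app g ts' = r.subst τ := by
  have hss' := forall_mem_normalForm_of_forall₂ hss
  have hts' := forall_mem_normalForm_of_forall₂ hts
  obtain ⟨n, hs'n, ht'n⟩ := hlm.convergent.exists_nfOf_of_joinable hj
    (StarRW.app_args (hss.imp fun _ _ h => h.1)) (StarRW.app_args (hts.imp fun _ _ h => h.1))
  have hfg : f ≠ g := fun hfg => hlm.root_ne hrule (by rw [hl, hr, hfg])
  have ht'nf : NormalForm R (Term.app g ts') := by
    by_contra ht'red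
    obtain ⟨l₂, r₂, σ₂, h₂, -, hn₂, hl₂, hr₂⟩ := hlm.exists_rule_of_nfOf hts' ht'red ht'n
    by_cases hs'nf : NormalForm R (Term.app f ss')
    · have hn : n.root = l.root := by rw [← hs'nf.eq_of_starRW hs'n.1, hl]; rfl
      exact hlm.root_ne_swap hrule h₂ (hl₂.trans hr.symm) (hr₂.trans hn)
    · obtain ⟨l₁, r₁, σ₁, h₁, -, hn₁, hl₁, -⟩ := hlm.exists_rule_of_nfOf hss' hs'nf hs'n
      exact hlm.subst_rhs_ne hrule hl hr h₁ h₂ hl₁ hl₂ σ₁ σ₂ (hn₁.symm.trans hn₂)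
  have ht'_eq : Term.app g ts' = n := ht'nf.eq_of_starRW ht'n.1
  have hs'red : ¬ NormalForm R (Term.app f ss') := fun hs'nf =>
    hfg (Term.app.inj ((hs'nf.eq_of_starRW hs'n.1).trans ht'_eq.symm)).1
  obtain ⟨l₁, r₁, σ, h₁, hs', hn, hl₁, hr₁⟩ := hlm.exists_rule_of_nfOf hss' hs'red hs'n
  obtain ⟨rfl, rfl⟩ := Prod.mk.inj <| hlm.eq_of_root_eq (Or.inl h₁) hrule (hl₁.trans hl.symm)
    (by rw [hr₁, ← ht'_eq, hr]; rfl)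
  rw [ht'_eq, hs', hn]
  exact ⟨⟨σ, [], .here _, .here _ _⟩, σ, rfl⟩
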